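/- arXiv:1012.2721 — 4 statements merged into one kernel-verified Lean document; each statement's English description precedes it below -/
import Mathlib

section
/- For arbitrary vectors x, y ∈ R^n, the cube of the matrix-valued cross product satisfies (x×y)³ = [(x·y)² - (x·x)(y·y)] (x×y). -/
open Matrix Filter Topology

/-- Matrix-valued cross product: `(x×y)ᵢⱼ = xᵢyⱼ - xⱼyᵢ`. -/
def cross {ι : Type*} (x y : ι → ℝ) : Matrix ι ι ℝ :=
  Matrix.of fun i j => x i * y j - x j * y i

lemma vmv_mul {n : ℕ} (a b c d : Fin n → ℝ) :
    vecMulVec a b * vecMulVec c d = (b ⬝ᵥ c) • vecMulVec a d := by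
  ext i j
  simp [Matrix.mul_apply, vecMulVec_apply, dotProduct, Finset.sum_mul, Finset.mul_sum]
  congr 1; ext k; ring

lemma cross_eq {n : ℕ} (x y : Fin n → ℝ) :
    cross x y = vecMulVec x y - vecMulVec y x := by
  ext i j; simp [cross, vecMulVec_apply]; ring

theorem stmt2 {n : ℕ} (x y : Fin n → ℝ) :
    (cross x y) ^ 3 = ((x ⬝ᵥ y) ^ 2 - (x ⬝ᵥ x) * (y ⬝ᵥ y)) • cross x y := by
  rw [cross_eq, pow_succ, pow_two]
  simp only [sub_mul, mul_sub, vmv_mul, smul_mul_assoc, mul_smul_comm, smul_sub, smul_smul]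
  have h : y ⬝ᵥ x = x ⬝ᵥ y := dotProduct_comm y x
  rw [h]
  module
end

section
/- Let f : R^n → R^n and ψ : R^n → R be C¹ with ∇ψ(q)·f(q) < 0 at a point q (so f(q) ≠ 0 and ∇ψ(q) ≠ 0). Define Q = (∇ψ×f)/(∇ψ·∇ψ) and D = -[ (f·f)/(∇ψ·f) E + (∇ψ×f)²/((∇ψ·f)(∇ψ·∇ψ)) ]. Then D is symmetric, Q is antisymmetric, and -(D+Q) ∇ψ(q) = f(q). -/
open Matrix Filter Topology

/-- The gradient of `ψ`, viewed as a plain vector of partial derivatives. -/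
noncomputable def grad {ι : Type*} [Fintype ι] (ψ : EuclideanSpace ℝ ι → ℝ)
    (q : EuclideanSpace ℝ ι) : ι → ℝ :=
  (gradient ψ q : EuclideanSpace ℝ ι)

section Decomposition

variable {ι : Type*}

-- `D` and `Q` of the paper, written for `g = ∇ψ(q)` and `v = f(q)`.
noncomputable def dissipationMatrix [Fintype ι] [DecidableEq ι] (g v : ι → ℝ) : Matrix ι ι ℝ :=
  -(((v ⬝ᵥ v) / (g ⬝ᵥ v)) • (1 : Matrix ι ι ℝ) + ((g ⬝ᵥ v) * (g ⬝ᵥ g))⁻¹ • cross g v ^ 2)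

noncomputable def rotationMatrix [Fintype ι] (g v : ι → ℝ) : Matrix ι ι ℝ :=
  (g ⬝ᵥ g)⁻¹ • cross g v

theorem cross_transpose (x y : ι → ℝ) : (cross x y)ᵀ = -cross x y := by
  ext i j
  simp [cross]

theorem cross_sq_transpose [Fintype ι] [DecidableEq ι] (x y : ι → ℝ) : (cross x y ^ 2)ᵀ = cross x y ^ 2 := by
  rw [sq, transpose_mul, cross_transpose, neg_mul_neg]

theorem cross_mulVec [Fintype ι] (x y z : ι → ℝ) :
    cross x y *ᵥ z = (y ⬝ᵥ z) • x - (x ⬝ᵥ z) • y := by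
  ext i
  simp only [cross, mulVec, dotProduct, of_apply, Pi.sub_apply, Pi.smul_apply, smul_eq_mul,
    sub_mul, Finset.sum_sub_distrib, Finset.sum_mul]
  congr 1 <;> exact Finset.sum_congr rfl fun j _ => by ring

theorem cross_mulVec_left [Fintype ι] (x y : ι → ℝ) :
    cross x y *ᵥ x = (x ⬝ᵥ y) • x - (x ⬝ᵥ x) • y := by
  rw [cross_mulVec, dotProduct_comm]

theorem cross_sq_mulVec_left [Fintype ι] [DecidableEq ι] (x y : ι → ℝ) :
    cross x y ^ 2 *ᵥ x = ((x ⬝ᵥ y) ^ 2 - (x ⬝ᵥ x) * (y ⬝ᵥ y)) • x := by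
  rw [sq, ← mulVec_mulVec, cross_mulVec_left, mulVec_sub, mulVec_smul, mulVec_smul,
    cross_mulVec_left, cross_mulVec]
  module

theorem dissipationMatrix_transpose [Fintype ι] [DecidableEq ι] (g v : ι → ℝ) :
    (dissipationMatrix g v)ᵀ = dissipationMatrix g v := by
  simp only [dissipationMatrix, transpose_neg, transpose_add, transpose_smul, transpose_one,
    cross_sq_transpose]

theorem rotationMatrix_transpose [Fintype ι] (g v : ι → ℝ) :
    (rotationMatrix g v)ᵀ = -rotationMatrix g v := by
  rw [rotationMatrix, transpose_smul, cross_transpose, smul_neg]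

theorem dissipationMatrix_mulVec_left [Fintype ι] [DecidableEq ι] {g : ι → ℝ} (v : ι → ℝ)
    (hg : g ⬝ᵥ g ≠ 0) :
    dissipationMatrix g v *ᵥ g = -((g ⬝ᵥ v) / (g ⬝ᵥ g)) • g := by
  rw [dissipationMatrix, neg_mulVec, add_mulVec, smul_mulVec, smul_mulVec, one_mulVec,
    cross_sq_mulVec_left, smul_smul, ← add_smul, ← neg_smul]
  congr 2
  -- when `g ⬝ᵥ v = 0` both coefficients of `dissipationMatrix` are junk zeros and the identity still holds
  rcases eq_or_ne (g ⬝ᵥ v) 0 with hgv | hgv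
  · simp [hgv]
  · field_simp
    ring

theorem rotationMatrix_mulVec_left [Fintype ι] {g : ι → ℝ} (v : ι → ℝ) (hg : g ⬝ᵥ g ≠ 0) :
    rotationMatrix g v *ᵥ g = ((g ⬝ᵥ v) / (g ⬝ᵥ g)) • g - v := by
  rw [rotationMatrix, smul_mulVec, cross_mulVec_left, smul_sub, smul_smul, smul_smul,
    inv_mul_cancel₀ hg, one_smul, inv_mul_eq_div]

theorem neg_dissipationMatrix_add_rotationMatrix_mulVec [Fintype ι] [DecidableEq ι]
    {g : ι → ℝ} (v : ι → ℝ) (hg : g ⬝ᵥ g ≠ 0) :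
    -((dissipationMatrix g v + rotationMatrix g v) *ᵥ g) = v := by
  rw [add_mulVec, dissipationMatrix_mulVec_left v hg, rotationMatrix_mulVec_left v hg]
  module

end Decomposition

theorem stmt6_general {n : ℕ} (ψ : EuclideanSpace ℝ (Fin n) → ℝ)
    (f : EuclideanSpace ℝ (Fin n) → EuclideanSpace ℝ (Fin n))
    (q : EuclideanSpace ℝ (Fin n)) (hq : grad ψ q ⬝ᵥ f q < 0) :
    (-(((f q ⬝ᵥ f q) / (grad ψ q ⬝ᵥ f q)) • (1 : Matrix (Fin n) (Fin n) ℝ) +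
        ((grad ψ q ⬝ᵥ f q) * (grad ψ q ⬝ᵥ grad ψ q))⁻¹ • (cross (grad ψ q) (f q)) ^ 2))ᵀ =
      -(((f q ⬝ᵥ f q) / (grad ψ q ⬝ᵥ f q)) • (1 : Matrix (Fin n) (Fin n) ℝ) +
        ((grad ψ q ⬝ᵥ f q) * (grad ψ q ⬝ᵥ grad ψ q))⁻¹ • (cross (grad ψ q) (f q)) ^ 2) ∧
    ((grad ψ q ⬝ᵥ grad ψ q)⁻¹ • cross (grad ψ q) (f q))ᵀ =
      -((grad ψ q ⬝ᵥ grad ψ q)⁻¹ • cross (grad ψ q) (f q)) ∧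
    -((-(((f q ⬝ᵥ f q) / (grad ψ q ⬝ᵥ f q)) • (1 : Matrix (Fin n) (Fin n) ℝ) +
          ((grad ψ q ⬝ᵥ f q) * (grad ψ q ⬝ᵥ grad ψ q))⁻¹ • (cross (grad ψ q) (f q)) ^ 2)) +
        (grad ψ q ⬝ᵥ grad ψ q)⁻¹ • cross (grad ψ q) (f q)).mulVec (grad ψ q) = f q := by
  have hg : grad ψ q ⬝ᵥ grad ψ q ≠ 0 := by
    rw [Ne, dotProduct_self_eq_zero]
    rintro hzero
    simp [hzero] at hq
  exact ⟨dissipationMatrix_transpose _ _, rotationMatrix_transpose _ _,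
    neg_dissipationMatrix_add_rotationMatrix_mulVec _ hg⟩

theorem stmt6 {n : ℕ} (ψ : EuclideanSpace ℝ (Fin n) → ℝ)
    (f : EuclideanSpace ℝ (Fin n) → EuclideanSpace ℝ (Fin n))
    (hψ : ContDiff ℝ 1 ψ)
    (q : EuclideanSpace ℝ (Fin n)) (hq : grad ψ q ⬝ᵥ f q < 0) :
    (-(((f q ⬝ᵥ f q) / (grad ψ q ⬝ᵥ f q)) • (1 : Matrix (Fin n) (Fin n) ℝ) +
        ((grad ψ q ⬝ᵥ f q) * (grad ψ q ⬝ᵥ grad ψ q))⁻¹ • (cross (grad ψ q) (f q)) ^ 2))ᵀ =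
      -(((f q ⬝ᵥ f q) / (grad ψ q ⬝ᵥ f q)) • (1 : Matrix (Fin n) (Fin n) ℝ) +
        ((grad ψ q ⬝ᵥ f q) * (grad ψ q ⬝ᵥ grad ψ q))⁻¹ • (cross (grad ψ q) (f q)) ^ 2) ∧
    ((grad ψ q ⬝ᵥ grad ψ q)⁻¹ • cross (grad ψ q) (f q))ᵀ =
      -((grad ψ q ⬝ᵥ grad ψ q)⁻¹ • cross (grad ψ q) (f q)) ∧
    -((-(((f q ⬝ᵥ f q) / (grad ψ q ⬝ᵥ f q)) • (1 : Matrix (Fin n) (Fin n) ℝ) +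
          ((grad ψ q ⬝ᵥ f q) * (grad ψ q ⬝ᵥ grad ψ q))⁻¹ • (cross (grad ψ q) (f q)) ^ 2)) +
        (grad ψ q ⬝ᵥ grad ψ q)⁻¹ • cross (grad ψ q) (f q)).mulVec (grad ψ q) = f q :=
  stmt6_general ψ f q hq
end

section
/- Let g = ∇ψ(q) and f = f(q) be vectors in R^n with g·f < 0. With S = -((g·f)/(f·f)) E, T = -(g×f)/(f·f), and D = -[ (f·f)/(g·f) E + (g×f)²/((g·f)(g·g)) ], the generalized Einstein relation (S+T) D (S−T) = S holds. -/
open Matrix Filter Topology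

lemma vmv_mul_s8 {n : ℕ} (x y z w : Fin n → ℝ) :
    vecMulVec x y * vecMulVec z w = (y ⬝ᵥ z) • vecMulVec x w := by
  ext i j
  simp only [Matrix.mul_apply, vecMulVec_apply, Matrix.smul_apply, smul_eq_mul, dotProduct,
    Finset.sum_mul]
  exact Finset.sum_congr rfl fun k _ => by ring

theorem stmt8 {n : ℕ} (g f : Fin n → ℝ) (hgf : g ⬝ᵥ f < 0) :
    ((-(g ⬝ᵥ f) / (f ⬝ᵥ f)) • (1 : Matrix (Fin n) (Fin n) ℝ) + (-(f ⬝ᵥ f)⁻¹) • cross g f) *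
        (-(((f ⬝ᵥ f) / (g ⬝ᵥ f)) • (1 : Matrix (Fin n) (Fin n) ℝ) +
          ((g ⬝ᵥ f) * (g ⬝ᵥ g))⁻¹ • (cross g f) ^ 2)) *
        ((-(g ⬝ᵥ f) / (f ⬝ᵥ f)) • (1 : Matrix (Fin n) (Fin n) ℝ) - (-(f ⬝ᵥ f)⁻¹) • cross g f) =
      (-(g ⬝ᵥ f) / (f ⬝ᵥ f)) • (1 : Matrix (Fin n) (Fin n) ℝ) := by
  have ha : g ⬝ᵥ f ≠ 0 := ne_of_lt hgf
  have hf : f ≠ 0 := by rintro rfl; simp at hgf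
  have hg : g ≠ 0 := by rintro rfl; simp at hgf
  have hb : f ⬝ᵥ f ≠ 0 := fun h => hf (dotProduct_self_eq_zero.mp h)
  have hc : g ⬝ᵥ g ≠ 0 := fun h => hg (dotProduct_self_eq_zero.mp h)
  set a := g ⬝ᵥ f
  set b := f ⬝ᵥ f
  set c := g ⬝ᵥ g
  set A := cross g f with hA
  have hGF : A = vecMulVec g f - vecMulVec f g := by
    ext i j
    simp [hA, cross, vecMulVec_apply, Matrix.sub_apply]
    ring
  have hcomm : f ⬝ᵥ g = a := by rw [dotProduct_comm]
  have h3 : A * A * A = (a ^ 2 - b * c) • A := by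
    rw [hGF]
    simp only [Matrix.sub_mul, Matrix.mul_sub, vmv_mul_s8, Matrix.smul_mul, Matrix.mul_smul,
      hcomm, smul_smul, smul_sub, sub_smul]
    module
  have h4 : A * A * A * A = (a ^ 2 - b * c) • (A * A) := by
    rw [h3, Matrix.smul_mul]
  simp only [pow_two, neg_add, Matrix.mul_add, Matrix.add_mul, Matrix.mul_sub, Matrix.sub_mul,
    Matrix.mul_neg, Matrix.neg_mul, Matrix.smul_mul, Matrix.mul_smul, smul_smul, one_mul,
    mul_one, Matrix.mul_one, Matrix.one_mul]
  simp only [← mul_assoc]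
  simp only [h3, h4, Matrix.smul_mul, smul_smul, smul_add, smul_sub, neg_smul, smul_neg]
  match_scalars <;> field_simp <;> ring
end

section
/- Let A be an n×n real matrix with no zero eigenvalue, and suppose P is a symmetric invertible matrix and R a symmetric positive definite matrix satisfying the Lyapunov equation AᵀP + PA + R = 0. Define S := -PA⁻¹ - (Aᵀ)⁻¹P and T := -PA⁻¹ + (Aᵀ)⁻¹P, so that S+T = -2PA⁻¹, and D := (1/4)P⁻¹RP⁻¹. Then the generalized Einstein relation (S+T)D(S−T) = S holds. -/
open Matrix

theorem stmt14 {n : ℕ} (A P R : Matrix (Fin n) (Fin n) ℝ)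
    (hA : IsUnit A.det) (hP : Pᵀ = P) (hPinv : IsUnit P.det)
    (hR : R.PosDef)
    (hlyap : Aᵀ * P + P * A + R = 0) :
    ((-(P * A⁻¹ + (Aᵀ)⁻¹ * P)) + (-(P * A⁻¹) + (Aᵀ)⁻¹ * P)) *
        ((1 / 4 : ℝ) • (P⁻¹ * R * P⁻¹)) *
        ((-(P * A⁻¹ + (Aᵀ)⁻¹ * P)) - (-(P * A⁻¹) + (Aᵀ)⁻¹ * P)) =
      -(P * A⁻¹ + (Aᵀ)⁻¹ * P) := by
  have hAt : IsUnit (Aᵀ).det := by rwa [Matrix.det_transpose]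
  have hR' : R = -(Aᵀ * P + P * A) := eq_neg_of_add_eq_zero_right hlyap
  have h1 : A⁻¹ * A = 1 := Matrix.nonsing_inv_mul A hA
  have h4 : Aᵀ * (Aᵀ)⁻¹ = 1 := Matrix.mul_nonsing_inv _ hAt
  have h5 : P⁻¹ * P = 1 := Matrix.nonsing_inv_mul P hPinv
  have h6 : P * P⁻¹ = 1 := Matrix.mul_nonsing_inv P hPinv
  rw [hR']
  have key : P * A⁻¹ * (P⁻¹ * (Aᵀ * P + P * A) * P⁻¹) * ((Aᵀ)⁻¹ * P)
      = P * A⁻¹ + (Aᵀ)⁻¹ * P := by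
    have e1 : P * A⁻¹ * (P⁻¹ * (Aᵀ * P) * P⁻¹) * ((Aᵀ)⁻¹ * P) = P * A⁻¹ := by
      calc P * A⁻¹ * (P⁻¹ * (Aᵀ * P) * P⁻¹) * ((Aᵀ)⁻¹ * P)
          = P * A⁻¹ * P⁻¹ * (Aᵀ * ((P * P⁻¹) * ((Aᵀ)⁻¹ * P))) := by
            simp only [Matrix.mul_assoc]
        _ = P * A⁻¹ * P⁻¹ * P := by rw [h6, Matrix.one_mul, ← Matrix.mul_assoc Aᵀ, h4,
            Matrix.one_mul]
        _ = P * A⁻¹ := by rw [Matrix.mul_assoc, Matrix.mul_assoc, h5, Matrix.mul_one]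
    have e2 : P * A⁻¹ * (P⁻¹ * (P * A) * P⁻¹) * ((Aᵀ)⁻¹ * P) = (Aᵀ)⁻¹ * P := by
      calc P * A⁻¹ * (P⁻¹ * (P * A) * P⁻¹) * ((Aᵀ)⁻¹ * P)
          = P * (A⁻¹ * ((P⁻¹ * P) * (A * (P⁻¹ * ((Aᵀ)⁻¹ * P))))) := by
            simp only [Matrix.mul_assoc]
        _ = P * (P⁻¹ * ((Aᵀ)⁻¹ * P)) := by
            rw [h5, Matrix.one_mul, ← Matrix.mul_assoc A⁻¹, h1, Matrix.one_mul]
        _ = (Aᵀ)⁻¹ * P := by rw [← Matrix.mul_assoc, h6, Matrix.one_mul]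
    calc P * A⁻¹ * (P⁻¹ * (Aᵀ * P + P * A) * P⁻¹) * ((Aᵀ)⁻¹ * P)
        = P * A⁻¹ * (P⁻¹ * (Aᵀ * P) * P⁻¹) * ((Aᵀ)⁻¹ * P)
          + P * A⁻¹ * (P⁻¹ * (P * A) * P⁻¹) * ((Aᵀ)⁻¹ * P) := by
          simp only [Matrix.mul_add, Matrix.add_mul]
      _ = P * A⁻¹ + (Aᵀ)⁻¹ * P := by rw [e1, e2]
  calc ((-(P * A⁻¹ + (Aᵀ)⁻¹ * P)) + (-(P * A⁻¹) + (Aᵀ)⁻¹ * P)) *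
        ((1 / 4 : ℝ) • (P⁻¹ * -(Aᵀ * P + P * A) * P⁻¹)) *
        ((-(P * A⁻¹ + (Aᵀ)⁻¹ * P)) - (-(P * A⁻¹) + (Aᵀ)⁻¹ * P))
      = -(P * A⁻¹ * (P⁻¹ * (Aᵀ * P + P * A) * P⁻¹) * ((Aᵀ)⁻¹ * P)) := by
        simp only [Matrix.mul_add, Matrix.add_mul, Matrix.mul_smul, Matrix.smul_mul,
          Matrix.neg_mul, Matrix.mul_neg, sub_eq_add_neg, neg_add, neg_neg, smul_smul]
        module
    _ = -(P * A⁻¹ + (Aᵀ)⁻¹ * P) := by rw [key]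
end
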